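/- Let m_n = ⌊log₂((n+1)/γ)⌋ for γ ∈ (1/2,1] and Ψ(x) = 2^{{log₂ x}}. Then the centering sequence a_n = Σ_{k=1}^n Ψ(k/γ)/k satisfies a_n - m_n = (n+1)/(γ·2^{m_n}) - 1/γ + Σ_{m=1}^{m_n} (⌈γ·2^m⌉ - γ·2^m)/(γ·2^m), and in particular a_n - m_n < 4 for all n ≥ 1. -/
import Mathlib

private lemma two_zpow_pos' (m : ℤ) : (0:ℝ) < 2 ^ m := zpow_pos (by norm_num) m

private lemma floor_logb_le' {x : ℝ} (hx : 0 < x) :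
    (2:ℝ) ^ ⌊Real.logb 2 x⌋ ≤ x := by
  have h := Real.rpow_le_rpow_of_exponent_le (by norm_num : (1:ℝ) ≤ 2)
    (Int.floor_le (Real.logb 2 x))
  rwa [Real.rpow_logb (by norm_num) (by norm_num) hx, Real.rpow_intCast] at h

private lemma lt_floor_logb' {x : ℝ} (hx : 0 < x) :
    x < (2:ℝ) ^ (⌊Real.logb 2 x⌋ + 1) := by
  have h := Real.rpow_lt_rpow_of_exponent_lt (by norm_num : (1:ℝ) < 2)
    (Int.lt_floor_add_one (Real.logb 2 x))
  rw [Real.rpow_logb (by norm_num) (by norm_num) hx] at h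
  have e : ((⌊Real.logb 2 x⌋ : ℝ) + 1) = ((⌊Real.logb 2 x⌋ + 1 : ℤ) : ℝ) := by push_cast; ring
  rwa [e, Real.rpow_intCast] at h

private lemma floor_logb_eq' {x : ℝ} (hx : 0 < x) {a : ℤ}
    (h1 : (2:ℝ) ^ a ≤ x) (h2 : x < (2:ℝ) ^ (a + 1)) :
    ⌊Real.logb 2 x⌋ = a := by
  apply Int.floor_eq_iff.mpr
  constructor
  · rw [Real.le_logb_iff_rpow_le (by norm_num) hx, Real.rpow_intCast]
    exact h1
  · rw [Real.logb_lt_iff_lt_rpow (by norm_num) hx]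
    have e : ((a:ℝ) + 1) = ((a + 1 : ℤ) : ℝ) := by push_cast; ring
    rw [e, Real.rpow_intCast]
    exact h2

private lemma psi_eq' {x : ℝ} (hx : 0 < x) :
    (2:ℝ) ^ Int.fract (Real.logb 2 x) = x / (2:ℝ) ^ ⌊Real.logb 2 x⌋ := by
  rw [← Int.self_sub_floor, Real.rpow_sub (by norm_num),
    Real.rpow_logb (by norm_num) (by norm_num) hx, Real.rpow_intCast]

private lemma Icc_int_insert' (a b : ℤ) (h : a ≤ b + 1) :
    Finset.Icc a (b+1) = insert (b+1) (Finset.Icc a b) := by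
  ext x; simp only [Finset.mem_Icc, Finset.mem_insert]; omega

private lemma geom_sum_eq' : ∀ N : ℕ,
    ∑ m ∈ Finset.Icc (1:ℤ) (N:ℤ), ((2:ℝ)^m)⁻¹ = 1 - ((2:ℝ)^(N:ℤ))⁻¹ := by
  intro N
  induction N with
  | zero => simp
  | succ N ih =>
    have h : ((N+1 : ℕ) : ℤ) = ((N:ℤ)+1 : ℤ) := by push_cast; ring
    rw [h, Icc_int_insert' 1 N (by omega), Finset.sum_insert (by simp),
      ih, zpow_add_one₀ (by norm_num)]
    ring

private lemma key' (γ : ℝ) (hγ1 : 1/2 < γ) (hγ2 : γ ≤ 1) : ∀ n : ℕ, 1 ≤ n →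
    (∑ k ∈ Finset.Icc 1 n, (2 : ℝ) ^ Int.fract (Real.logb 2 ((k : ℝ) / γ)) / k) =
      (⌊Real.logb 2 (((n : ℝ) + 1) / γ)⌋ : ℝ) +
      ((n : ℝ) + 1) / (γ * (2 : ℝ) ^ ⌊Real.logb 2 (((n : ℝ) + 1) / γ)⌋) - 1 / γ +
        ∑ m ∈ Finset.Icc (1 : ℤ) ⌊Real.logb 2 (((n : ℝ) + 1) / γ)⌋,
          ((⌈γ * (2 : ℝ) ^ m⌉ : ℝ) - γ * (2 : ℝ) ^ m) / (γ * (2 : ℝ) ^ m) := by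
  have hγ0 : (0:ℝ) < γ := by linarith
  intro n
  induction n with
  | zero => omega
  | succ n ih =>
    intro _
    have e : (((n+1 : ℕ) : ℝ) + 1) = (n:ℝ) + 2 := by push_cast; ring
    rw [e]
    rcases Nat.eq_zero_or_pos n with rfl | hn
    · -- base case n = 1
      have h2γ : (0:ℝ) < ((0:ℕ):ℝ) + 2 := by norm_num
      have e0 : (((0:ℕ):ℝ) + 2) = (2:ℝ) := by norm_num
      rw [e0]
      have f1 : ⌊Real.logb 2 ((2:ℝ)/γ)⌋ = 1 := by
        apply floor_logb_eq' (by positivity)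
        · rw [zpow_one, le_div_iff₀ hγ0]; linarith
        · have : ((2:ℝ))^(1+1:ℤ) = 4 := by norm_num
          rw [this, div_lt_iff₀ hγ0]; linarith
      have hsum : (∑ k ∈ Finset.Icc 1 (0+1:ℕ),
          (2 : ℝ) ^ Int.fract (Real.logb 2 ((k : ℝ) / γ)) / k) = 1/γ := by
        rw [Finset.Icc_self, Finset.sum_singleton]
        have f0 : ⌊Real.logb 2 ((1:ℝ)/γ)⌋ = 0 := by
          apply floor_logb_eq' (by positivity)
          · rw [zpow_zero, le_div_iff₀ hγ0]; linarith
          · rw [zero_add, zpow_one, div_lt_iff₀ hγ0]; linarith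
        have e1 : (((0+1:ℕ)):ℝ) = (1:ℝ) := by norm_num
        rw [e1, psi_eq' (by positivity : (0:ℝ) < (1:ℝ)/γ), f0, zpow_zero]
        ring
      rw [hsum, f1]
      have c1 : (⌈γ * (2:ℝ)^(1:ℤ)⌉ : ℤ) = 2 := by
        rw [Int.ceil_eq_iff]
        rw [zpow_one]
        constructor
        · push_cast; linarith
        · push_cast; linarith
      rw [Finset.Icc_self, Finset.sum_singleton, c1]
      rw [zpow_one]
      push_cast
      field_simp
      ring
    · -- inductive step, n ≥ 1
      have hn' : (1:ℝ) ≤ (n:ℝ) := by exact_mod_cast hn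
      set M := ⌊Real.logb 2 (((n:ℝ) + 1) / γ)⌋ with hM
      have hx : (0:ℝ) < ((n:ℝ) + 1) / γ := by positivity
      have hl : γ * 2^M ≤ (n:ℝ) + 1 := by
        have := (le_div_iff₀ hγ0).mp (floor_logb_le' hx)
        linarith
      have hr : (n:ℝ) + 1 < γ * 2^(M+1) := by
        have := (div_lt_iff₀ hγ0).mp (lt_floor_logb' hx)
        linarith
      have hM1 : 1 ≤ M := by
        apply Int.le_floor.mpr
        rw [show ((1:ℤ):ℝ) = (1:ℝ) by norm_num]
        rw [Real.le_logb_iff_rpow_le (by norm_num) hx, Real.rpow_one, le_div_iff₀ hγ0]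
        linarith
      have hpsi : (2:ℝ) ^ Int.fract (Real.logb 2 (((n+1:ℕ):ℝ)/γ)) / ((n+1:ℕ):ℝ)
          = 1/(γ * 2^M) := by
        have e2 : ((n+1:ℕ):ℝ) = (n:ℝ)+1 := by push_cast; ring
        rw [e2, psi_eq' hx, ← hM]
        have h2M := two_zpow_pos' M
        field_simp
      rw [Finset.sum_Icc_succ_top (by omega : 1 ≤ n+1), hpsi, ih hn]
      have h2M := two_zpow_pos' M
      have h2M1 := two_zpow_pos' (M+1)
      rcases lt_or_ge ((n:ℝ)+2) (γ * 2^(M+1)) with hcase | hcase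
      · -- floor stays M
        have fM : ⌊Real.logb 2 (((n:ℝ)+2)/γ)⌋ = M := by
          apply floor_logb_eq' (by positivity)
          · refine le_trans (floor_logb_le' hx) ?_
            gcongr
            linarith
          · rw [div_lt_iff₀ hγ0]; linarith
        rw [fM]
        field_simp
        ring
      · -- floor becomes M+1
        have h2 : (2:ℝ)^(M+1+1) = 2 * 2^(M+1) := by
          rw [zpow_add_one₀ (by norm_num : (2:ℝ) ≠ 0)]; ring
        have fM : ⌊Real.logb 2 (((n:ℝ)+2)/γ)⌋ = M + 1 := by
          apply floor_logb_eq' (by positivity)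
          · rw [le_div_iff₀ hγ0]; linarith
          · rw [div_lt_iff₀ hγ0, h2]; linarith
        have hceil : (⌈γ * (2:ℝ)^(M+1)⌉ : ℤ) = (n:ℤ)+2 := by
          rw [Int.ceil_eq_iff]
          constructor
          · push_cast; linarith
          · push_cast; linarith
        rw [fM, Icc_int_insert' 1 M (by omega), Finset.sum_insert (by simp), hceil]
        have h2' : (2:ℝ)^(M+1) = 2 * 2^M := by
          rw [zpow_add_one₀ (by norm_num : (2:ℝ) ≠ 0)]; ring
        rw [h2']
        push_cast
        field_simp
        ring

/-- For `γ ∈ (1/2,1]`, `m_n = ⌊log₂((n+1)/γ)⌋`, `Ψ(x) = 2^{{log₂ x}}` and the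
centering `a_n = Σ_{k=1}^n Ψ(k/γ)/k`:
`a_n - m_n = (n+1)/(γ 2^{m_n}) - 1/γ + Σ_{m=1}^{m_n} (⌈γ2^m⌉ - γ2^m)/(γ2^m)`,
and in particular `a_n - m_n < 4` for all `n ≥ 1`. -/
theorem stmt_19 (γ : ℝ) (hγ : γ ∈ Set.Ioc (1 / 2 : ℝ) 1) (n : ℕ) (hn : 1 ≤ n) :
    (∑ k ∈ Finset.Icc 1 n, (2 : ℝ) ^ Int.fract (Real.logb 2 ((k : ℝ) / γ)) / k) -
        (⌊Real.logb 2 (((n : ℝ) + 1) / γ)⌋ : ℝ) =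
      ((n : ℝ) + 1) / (γ * (2 : ℝ) ^ ⌊Real.logb 2 (((n : ℝ) + 1) / γ)⌋) - 1 / γ +
        ∑ m ∈ Finset.Icc (1 : ℤ) ⌊Real.logb 2 (((n : ℝ) + 1) / γ)⌋,
          ((⌈γ * (2 : ℝ) ^ m⌉ : ℝ) - γ * (2 : ℝ) ^ m) / (γ * (2 : ℝ) ^ m) ∧
    (∑ k ∈ Finset.Icc 1 n, (2 : ℝ) ^ Int.fract (Real.logb 2 ((k : ℝ) / γ)) / k) -
        (⌊Real.logb 2 (((n : ℝ) + 1) / γ)⌋ : ℝ) < 4 := by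
  obtain ⟨hγ1, hγ2⟩ := hγ
  have hγ0 : (0:ℝ) < γ := by linarith
  have hid := key' γ hγ1 hγ2 n hn
  constructor
  · rw [hid]; ring
  · set M := ⌊Real.logb 2 (((n:ℝ) + 1) / γ)⌋ with hMdef
    have hx : (0:ℝ) < ((n:ℝ) + 1) / γ := by positivity
    have h2M := two_zpow_pos' M
    have hM0 : 0 ≤ M := by
      apply Int.le_floor.mpr
      rw [show ((0:ℤ):ℝ) = (0:ℝ) by norm_num]
      rw [Real.le_logb_iff_rpow_le (by norm_num) hx, Real.rpow_zero, le_div_iff₀ hγ0]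
      have : (1:ℝ) ≤ (n:ℝ) := by exact_mod_cast hn
      linarith
    have hX : ((n:ℝ)+1)/(γ * 2^M) < 2 := by
      rw [div_lt_iff₀ (by positivity)]
      have := (div_lt_iff₀ hγ0).mp (lt_floor_logb' hx)
      have h2' : (2:ℝ)^(M+1) = 2 * 2^M := by
        rw [zpow_add_one₀ (by norm_num : (2:ℝ) ≠ 0)]; ring
      rw [h2'] at this
      linarith
    have hS : (∑ m ∈ Finset.Icc (1 : ℤ) M,
        ((⌈γ * (2 : ℝ) ^ m⌉ : ℝ) - γ * (2 : ℝ) ^ m) / (γ * (2 : ℝ) ^ m)) ≤ 1/γ := by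
      calc (∑ m ∈ Finset.Icc (1 : ℤ) M,
            ((⌈γ * (2 : ℝ) ^ m⌉ : ℝ) - γ * (2 : ℝ) ^ m) / (γ * (2 : ℝ) ^ m))
          ≤ ∑ m ∈ Finset.Icc (1 : ℤ) M, (1/γ) * ((2:ℝ)^m)⁻¹ := by
            apply Finset.sum_le_sum
            intro m _
            have h2m := two_zpow_pos' m
            have hc : (0:ℝ) < γ * 2^m := by positivity
            have hce := Int.ceil_lt_add_one (γ * (2:ℝ)^m)
            rw [div_le_iff₀ hc]
            have e : 1/γ * ((2:ℝ)^m)⁻¹ * (γ * 2^m) = 1 := by field_simp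
            rw [e]
            linarith
        _ = (1/γ) * ∑ m ∈ Finset.Icc (1 : ℤ) M, ((2:ℝ)^m)⁻¹ := by
            rw [Finset.mul_sum]
        _ ≤ 1/γ := by
            have hMt : ((M.toNat : ℕ) : ℤ) = M := Int.toNat_of_nonneg hM0
            have := geom_sum_eq' M.toNat
            rw [hMt] at this
            rw [this]
            have h1 : (0:ℝ) < ((2:ℝ)^M)⁻¹ := by positivity
            have h2 : (0:ℝ) < 1/γ := by positivity
            nlinarith
    linarith [hid, hX, hS]
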